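/- arXiv:1904.04791 — 2 statements merged into one kernel-verified Lean document; each statement's English description precedes it below -/
import Mathlib

section
/- If a graph G has an H-partition with layered width at most ℓ such that H has treewidth at most k, then G has layered treewidth at most (k+1)ℓ. -/
/-!
Common definitions for formalizing "Planar Graphs have Bounded Queue-Number"
(Dujmović, Joret, Micek, Morin, Ueckerdt, Wood).

All graphs are finite simple graphs (`SimpleGraph V` with `[Fintype V]`).
-/

open Function

namespace QueuePaper

/-! ### Queue layouts -/

/-- Given a vertex ordering of `G` (an injection `f : V → ℕ`), this says the edges of `G`
can be partitioned into `k` queues with respect to this ordering, i.e. there is an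
assignment `q` of edges to `{0, …, k-1}` such that no two edges in the same class are
nested. (Edges `vw` and `xy` are nested when `f v < f x < f y < f w`.) -/
def OrderingHasQueues {V : Type*} (G : SimpleGraph V) (f : V → ℕ) (k : ℕ) : Prop :=
  ∃ q : Sym2 V → ℕ,
    (∀ ⦃v w : V⦄, G.Adj v w → q s(v, w) < k) ∧
    ∀ ⦃v w x y : V⦄, G.Adj v w → G.Adj x y → q s(v, w) = q s(x, y) →
      ¬(f v < f x ∧ f x < f y ∧ f y < f w)

/-- `G` has a `k`-queue layout: a linear ordering of the vertices together with a
partition of the edges into `k` queues. Equivalently, the queue-number of `G` is at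
most `k`. -/
def HasQueueLayout {V : Type*} (G : SimpleGraph V) (k : ℕ) : Prop :=
  ∃ f : V → ℕ, Function.Injective f ∧ OrderingHasQueues G f k

/-! ### Layerings and partitions -/

/-- A layering of `G`, presented as the function sending each vertex to the index of its
layer: the endpoints of every edge lie in the same or in consecutive layers. -/
def IsLayering {V : Type*} (G : SimpleGraph V) (L : V → ℕ) : Prop :=
  ∀ ⦃v w : V⦄, G.Adj v w → L v ≤ L w + 1 ∧ L w ≤ L v + 1

/-- A BFS layering of `G`: a root is chosen in each connected component and each vertex is
assigned the distance to the root of its component. -/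
def IsBFSLayering {V : Type*} (G : SimpleGraph V) (L : V → ℕ) : Prop :=
  ∃ root : V → V,
    (∀ v, G.Reachable v (root v)) ∧
    (∀ ⦃v w : V⦄, G.Reachable v w → root v = root w) ∧
    ∀ v, L v = G.dist (root v) v

/-- An `H`-partition of `G`, presented as the function `P` sending each vertex of `G` to
the index (vertex of `H`) of its part: parts are non-empty (`P` is surjective) and for
every edge `vw` of `G`, either `v, w` lie in the same part or the parts of `v` and `w`
are adjacent in `H`. -/
def IsHPartition {V X : Type*} (G : SimpleGraph V) (H : SimpleGraph X) (P : V → X) : Prop :=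
  Function.Surjective P ∧ ∀ ⦃v w : V⦄, G.Adj v w → P v = P w ∨ H.Adj (P v) (P w)

/-- The partition (given by the fibres of) `P` has layered width at most `ℓ` with respect
to the layering `L`: every part has at most `ℓ` vertices in each layer. -/
def LayeredWidthLE {V X : Type*} (P : V → X) (L : V → ℕ) (ℓ : ℕ) : Prop :=
  ∀ (x : X) (i : ℕ), {v : V | P v = x ∧ L v = i}.ncard ≤ ℓ

/-- The quotient graph `G/P` of a partition of `G` given by the fibres of a surjection
`P : V → X`: distinct parts are adjacent iff some vertex of one is adjacent in `G` to some
vertex of the other. -/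
def quotientGraph {V X : Type*} (G : SimpleGraph V) (P : V → X) : SimpleGraph X where
  Adj x y := x ≠ y ∧ ∃ v w, G.Adj v w ∧ P v = x ∧ P w = y
  symm := by
    constructor
    rintro x y ⟨hxy, v, w, hvw, hv, hw⟩
    exact ⟨Ne.symm hxy, w, v, hvw.symm, hw, hv⟩
  loopless := by constructor; rintro x ⟨h, -⟩; exact h rfl

/-! ### Tree-decompositions and treewidth -/

/-- `(T, B)` is a tree-decomposition of `G`: `T` is a tree, for each vertex `v` of `G` the
set of nodes of `T` whose bag contains `v` induces a non-empty connected subgraph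
(subtree) of `T`, and each edge of `G` has both endpoints in some bag. -/
def IsTreeDecomp {V ι : Type*} (G : SimpleGraph V) (T : SimpleGraph ι) (B : ι → Set V) :
    Prop :=
  T.IsTree ∧
  (∀ v : V, (T.induce {x : ι | v ∈ B x}).Connected) ∧
  (∀ ⦃v w : V⦄, G.Adj v w → ∃ x, v ∈ B x ∧ w ∈ B x)

/-- `G` has treewidth at most `k`: it has a tree-decomposition with all bags of size at
most `k + 1`. -/
def TreewidthLE {V : Type*} (G : SimpleGraph V) (k : ℕ) : Prop :=
  ∃ (ι : Type) (T : SimpleGraph ι) (B : ι → Set V),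
    IsTreeDecomp G T B ∧ ∀ x, (B x).ncard ≤ k + 1

/-- `G` has layered treewidth at most `k`: it has a tree-decomposition and a layering such
that every bag has at most `k` vertices in each layer. -/
def LayeredTreewidthLE {V : Type*} (G : SimpleGraph V) (k : ℕ) : Prop :=
  ∃ (ι : Type) (T : SimpleGraph ι) (B : ι → Set V) (L : V → ℕ),
    IsTreeDecomp G T B ∧ IsLayering G L ∧
    ∀ (x : ι) (i : ℕ), {v : V | v ∈ B x ∧ L v = i}.ncard ≤ k

/-! ### Combinatorial embeddings, Euler genus, planarity

Embeddings of graphs in surfaces are formalized combinatorially, via embedding schemes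
(Heffter–Edmonds–Ringel): a rotation system (for each vertex, a cyclic ordering of the
darts leaving it) together with a signature on the edges. Faces are recovered as the
orbits of the face-tracing permutation on signed darts; each face corresponds to exactly
two orbits. For a connected graph, Euler's formula `n - m + f = 2 - g` determines the
Euler genus `g` of the embedding, and the Euler genus of a graph is the minimum over all
embedding schemes; a (possibly disconnected) graph embeds in a surface of Euler genus `g`
iff each of its components does. -/

/-- The face-tracing step of the embedding scheme `(ρ, σ)` on signed darts: having
traversed dart `d` with current sign `s`, the sign becomes `s' = s * σ(d)` and the next
dart is obtained from the reversal of `d` by applying the rotation at its tail, forwards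
or backwards according to `s'`. -/
def faceStep {V : Type*} (G : SimpleGraph V) (ρ : Equiv.Perm G.Dart) (σ : Sym2 V → Bool)
    (p : G.Dart × Bool) : G.Dart × Bool :=
  ((if (p.2 == σ p.1.edge) then ρ p.1.symm else ρ.symm p.1.symm), p.2 == σ p.1.edge)

/-- `ρ` is a rotation system on `G`: a permutation of the darts preserving tails and
acting as a single cycle on the darts at each vertex (a cyclic ordering of the darts
leaving each vertex). -/
def IsRotation {V : Type*} (G : SimpleGraph V) (ρ : Equiv.Perm G.Dart) : Prop :=
  (∀ d : G.Dart, (ρ d).fst = d.fst) ∧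
  (∀ d e : G.Dart, d.fst = e.fst → ∃ n : ℕ, (⇑ρ)^[n] d = e)

/-- The embedding scheme `(ρ, σ)` of `G` has Euler genus at most `g`: each connected
component `C` (containing at least one edge) satisfies Euler's inequality
`2 - (n_C - m_C + f_C) ≤ g`, written below with the number of darts of `C`
(which is `2 m_C`) and the number of orbits on signed darts of the face-tracing
permutation restricted to `C` (which is `2 f_C`). -/
def SchemeGenusLE {V : Type*} (G : SimpleGraph V) (ρ : Equiv.Perm G.Dart)
    (σ : Sym2 V → Bool) (g : ℕ) : Prop :=
  ∀ C : G.ConnectedComponent,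
    (∃ d : G.Dart, G.connectedComponentMk d.fst = C) →
    4 + Nat.card {d : G.Dart // G.connectedComponentMk d.fst = C}
      ≤ 2 * g + 2 * Nat.card {v : V // G.connectedComponentMk v = C}
        + Nat.card (Quot (fun a b : {p : G.Dart × Bool // G.connectedComponentMk p.1.fst = C} =>
            faceStep G ρ σ a.val = b.val))

/-- `G` has Euler genus at most `g`: it embeds in a surface of Euler genus at most `g`,
i.e. it has an embedding scheme of Euler genus at most `g`. -/
def EulerGenusLE {V : Type*} (G : SimpleGraph V) (g : ℕ) : Prop :=
  ∃ (ρ : Equiv.Perm G.Dart) (σ : Sym2 V → Bool), IsRotation G ρ ∧ SchemeGenusLE G ρ σ g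

/-- `G` is planar: it embeds in the sphere (Euler genus 0). -/
def IsPlanar {V : Type*} (G : SimpleGraph V) : Prop := EulerGenusLE G 0

/-- `G` is apex: deleting at most one vertex makes it planar. -/
def IsApex {V : Type*} (G : SimpleGraph V) : Prop :=
  ∃ S : Set V, S.ncard ≤ 1 ∧ IsPlanar (G.induce Sᶜ)

/-- `G` together with one new dominant (apex) vertex. -/
def addApex {V : Type*} (G : SimpleGraph V) : SimpleGraph (Option V) where
  Adj a b := (a = none ∧ ∃ w, b = some w) ∨ (b = none ∧ ∃ v, a = some v) ∨
    (∃ v w, a = some v ∧ b = some w ∧ G.Adj v w)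
  symm := by
    constructor
    rintro a b (⟨rfl, w, rfl⟩ | ⟨rfl, v, rfl⟩ | ⟨v, w, rfl, rfl, h⟩)
    · exact Or.inr (Or.inl ⟨rfl, w, rfl⟩)
    · exact Or.inl ⟨rfl, v, rfl⟩
    · exact Or.inr (Or.inr ⟨w, v, rfl, rfl, h.symm⟩)
  loopless := by
    constructor
    rintro a (⟨rfl, w, h⟩ | ⟨rfl, v, h⟩ | ⟨v, w, rfl, h2, h⟩)
    · cases h
    · cases h
    · obtain rfl : v = w := by injection h2
      exact G.loopless.irrefl v h

/-- `G` is outerplanar: it has a planar embedding with all vertices on the outer face;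
equivalently (and this is the formal definition used here), adding one new vertex
adjacent to all vertices of `G` yields a planar graph. -/
def IsOuterplanar {V : Type*} (G : SimpleGraph V) : Prop := IsPlanar (addApex G)

/-- `G` is a planar triangulation: a connected graph with a planar embedding scheme
(Euler's formula for genus 0 holds, written with darts and face-tracing orbits as in
`SchemeGenusLE`) in which every facial walk has length 3, i.e. every face (including the
outer face) is a triangle. -/
def IsPlanarTriangulation {V : Type*} (G : SimpleGraph V) : Prop :=
  G.Connected ∧
  ∃ (ρ : Equiv.Perm G.Dart) (σ : Sym2 V → Bool),
    IsRotation G ρ ∧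
    (∀ p : G.Dart × Bool, (faceStep G ρ σ)^[3] p = p) ∧
    4 + Nat.card G.Dart
      = 2 * Nat.card V + Nat.card (Quot (fun a b : G.Dart × Bool => faceStep G ρ σ a = b))

/-! ### Vertical paths and tripods -/

/-- `S` is (the vertex set of) a vertical path in the tree `T` rooted at `r`: a non-empty
path in `T` whose vertices have pairwise distinct distances from the root (so distances
along the path are `d+1, d+2, …, d+p` for some `d`). -/
def IsVerticalPath {V : Type*} (T : SimpleGraph V) (r : V) (S : Set V) : Prop :=
  S.Nonempty ∧ (T.induce S).Connected ∧ Set.InjOn (T.dist r) S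

/-- `S` is (the vertex set of) a tripod in the spanning tree `T` (rooted at `r`) of `G`:
the union of up to three pairwise disjoint vertical paths in `T` whose lower endpoints
(the endpoints farthest from the root) form a clique in `G`. -/
def IsTripod {V : Type*} (G T : SimpleGraph V) (r : V) (S : Set V) : Prop :=
  ∃ P : Fin 3 → Set V,
    S = P 0 ∪ P 1 ∪ P 2 ∧
    (∀ i j, i ≠ j → Disjoint (P i) (P j)) ∧
    (∀ i, P i = ∅ ∨ IsVerticalPath T r (P i)) ∧
    ∃ low : Fin 3 → V,
      (∀ i, (P i).Nonempty → low i ∈ P i ∧ ∀ x ∈ P i, T.dist r x ≤ T.dist r (low i)) ∧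
      ∀ i j, i ≠ j → (P i).Nonempty → (P j).Nonempty → G.Adj (low i) (low j)

/-! ### Minors -/

/-- `H` is a minor of `G`: there is a family of non-empty, connected, pairwise disjoint
branch sets in `G`, indexed by the vertices of `H`, with an edge of `G` between the branch
sets corresponding to each edge of `H`. -/
def IsMinor {α β : Type*} (H : SimpleGraph α) (G : SimpleGraph β) : Prop :=
  ∃ B : α → Set β,
    (∀ x, (B x).Nonempty) ∧
    (∀ x, (G.induce (B x)).Connected) ∧
    (∀ x y, x ≠ y → Disjoint (B x) (B y)) ∧
    ∀ ⦃x y⦄, H.Adj x y → ∃ u ∈ B x, ∃ v ∈ B y, G.Adj u v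

/-! ### Strong products and subgraph embeddings -/

/-- The strong product `A ⊠ B`. -/
def strongProd {α β : Type*} (A : SimpleGraph α) (B : SimpleGraph β) :
    SimpleGraph (α × β) where
  Adj p q := p ≠ q ∧ (p.1 = q.1 ∨ A.Adj p.1 q.1) ∧ (p.2 = q.2 ∨ B.Adj p.2 q.2)
  symm := by
    constructor
    rintro p q ⟨hne, h1, h2⟩
    exact ⟨hne.symm, Or.imp (fun h => h.symm) (fun h => h.symm) h1,
      Or.imp (fun h => h.symm) (fun h => h.symm) h2⟩
  loopless := ⟨fun p h => h.1 rfl⟩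

/-- `G` is (isomorphic to) a subgraph of `G'`. -/
def EmbedsIn {α β : Type*} (G : SimpleGraph α) (G' : SimpleGraph β) : Prop :=
  ∃ f : α → β, Function.Injective f ∧ ∀ ⦃v w⦄, G.Adj v w → G'.Adj (f v) (f w)

end QueuePaper

/-!
Pull the tree-decomposition of `H` back along the partition: the bag of a node becomes the
union of the parts indexed by its bag. Each vertex `v` occupies exactly the nodes that the
index of its part occupies, and an edge of `G` lies inside a part or between adjacent parts,
so this is a tree-decomposition of `G`. Within a layer, a bag then meets at most `k + 1`
parts, each in at most `ℓ` vertices.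
-/

namespace QueuePaper

theorem IsTreeDecomp.preimage {V X ι : Type*} {G : SimpleGraph V} {H : SimpleGraph X}
    {T : SimpleGraph ι} {B : ι → Set X} (hB : IsTreeDecomp H T B) {P : V → X}
    (hP : ∀ ⦃v w : V⦄, G.Adj v w → P v = P w ∨ H.Adj (P v) (P w)) :
    IsTreeDecomp G T fun t => P ⁻¹' B t := by
  obtain ⟨hT, hconn, hedge⟩ := hB
  refine ⟨hT, fun v => hconn (P v), fun v w hvw => ?_⟩
  rcases hP hvw with hvw | hvw
  · obtain ⟨⟨t, ht⟩⟩ := (hconn (P v)).nonempty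
    exact ⟨t, ht, show P w ∈ B t from hvw ▸ ht⟩
  · exact hedge hvw

theorem LayeredWidthLE.ncard_preimage_layer_le {V X : Type*} {P : V → X} {L : V → ℕ} {ℓ : ℕ}
    (hW : LayeredWidthLE P L ℓ) {S : Set X} (hS : S.Finite) (i : ℕ) :
    {v : V | v ∈ P ⁻¹' S ∧ L v = i}.ncard ≤ S.ncard * ℓ := by
  lift S to Finset X using hS
  calc {v : V | v ∈ P ⁻¹' S ∧ L v = i}.ncard
      = (⋃ y ∈ S, {v : V | P v = y ∧ L v = i}).ncard := by
        congr 1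
        ext v
        simp
    _ ≤ ∑ y ∈ S, {v : V | P v = y ∧ L v = i}.ncard := S.set_ncard_biUnion_le _
    _ ≤ ∑ _y ∈ S, ℓ := Finset.sum_le_sum fun y _ => hW y i
    _ = (S : Set X).ncard * ℓ := by rw [Finset.sum_const, smul_eq_mul, Set.ncard_coe_finset]

end QueuePaper

open QueuePaper in
theorem layeredTreewidth_of_HPartition_general {V X : Type} [Fintype X]
    (G : SimpleGraph V) (H : SimpleGraph X) (P : V → X) (L : V → ℕ) (k ℓ : ℕ)
    (hP : IsHPartition G H P) (hL : IsLayering G L) (hW : LayeredWidthLE P L ℓ)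
    (hH : TreewidthLE H k) :
    LayeredTreewidthLE G ((k + 1) * ℓ) := by
  obtain ⟨ι, T, B, hB, hbag⟩ := hH
  refine ⟨ι, T, fun t => P ⁻¹' B t, L, IsTreeDecomp.preimage hB hP.2, hL, fun t i => ?_⟩
  calc {v : V | v ∈ P ⁻¹' B t ∧ L v = i}.ncard
      ≤ (B t).ncard * ℓ := LayeredWidthLE.ncard_preimage_layer_le hW (Set.toFinite _) i
    _ ≤ (k + 1) * ℓ := Nat.mul_le_mul_right ℓ (hbag t)

open QueuePaper in
/-- If a graph `G` has an `H`-partition with layered width at most `ℓ` such that `H` has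
treewidth at most `k`, then `G` has layered treewidth at most `(k+1)ℓ`. -/
theorem layeredTreewidth_of_HPartition {V X : Type} [Fintype V] [Fintype X]
    (G : SimpleGraph V) (H : SimpleGraph X) (P : V → X) (L : V → ℕ) (k ℓ : ℕ)
    (hP : IsHPartition G H P) (hL : IsLayering G L) (hW : LayeredWidthLE P L ℓ)
    (hH : TreewidthLE H k) :
    LayeredTreewidthLE G ((k + 1) * ℓ) :=
  layeredTreewidth_of_HPartition_general G H P L k ℓ hP hL hW hH
end

section
/- If a graph G has an H-partition of layered width ℓ with respect to a layering (V_0, V_1, …), for some graph H of treewidth at most k, then G has an H′-partition of layered width 1 with respect to the same layering, for some graph H′ of treewidth at most (k+1)ℓ − 1. -/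
/-!
Common definitions for formalizing "Planar Graphs have Bounded Queue-Number"
(Dujmović, Joret, Micek, Morin, Ueckerdt, Wood).

All graphs are finite simple graphs (`SimpleGraph V` with `[Fintype V]`).
-/

open Function

/-! Number the vertices of each part within each layer by `0, …, ℓ - 1`; the pairs
(part, number) form an `H ⊠ K_ℓ`-partition of layered width one, and blowing every bag of a
tree-decomposition of `H` up by the factor `K_ℓ` gives bags of size `(k + 1) ℓ`. -/

namespace QueuePaper

theorem exists_fin_injective_prod_of_ncard_fiber_le {V Y : Type*} [Finite V] (f : V → Y)
    {ℓ : ℕ} (h : ∀ y, {v | f v = y}.ncard ≤ ℓ) :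
    ∃ r : V → Fin ℓ, Injective fun v => (f v, r v) := by
  let g (y : Y) : {v | f v = y} ↪ Fin ℓ :=
    (Finite.equivFin _).toEmbedding.trans
      (Fin.castLEEmb (by simpa only [Nat.card_coe_set_eq] using h y))
  have hg : ∀ v y (hv : f v = y), g (f v) ⟨v, rfl⟩ = g y ⟨v, hv⟩ := by rintro v y rfl; rfl
  refine ⟨fun v => g (f v) ⟨v, rfl⟩, fun v w hvw => ?_⟩
  obtain ⟨hf, hr⟩ : f v = f w ∧ g (f v) ⟨v, rfl⟩ = g (f w) ⟨w, rfl⟩ := Prod.mk.inj hvw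
  rw [hg v (f w) hf] at hr
  exact congrArg Subtype.val ((g (f w)).injective hr)

theorem LayeredWidthLE.exists_fin_refinement {V X : Type*} [Finite V] {P : V → X} {L : V → ℕ}
    {ℓ : ℕ} (h : LayeredWidthLE P L ℓ) :
    ∃ r : V → Fin ℓ, LayeredWidthLE (fun v => (P v, r v)) L 1 := by
  obtain ⟨r, hr⟩ := exists_fin_injective_prod_of_ncard_fiber_le (fun v => (P v, L v))
    (fun y => by simpa only [Prod.ext_iff] using h y.1 y.2)
  refine ⟨r, fun x i => (Set.ncard_le_one_iff (Set.toFinite _)).2 ?_⟩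
  rintro v w ⟨rfl, hv⟩ ⟨hvw, hw⟩
  exact hr (Prod.ext (Prod.ext (congrArg Prod.fst hvw).symm (hv.trans hw.symm))
    (congrArg Prod.snd hvw).symm)

theorem LayeredWidthLE.rangeFactorization {V X : Type*} {P : V → X} {L : V → ℕ} {ℓ : ℕ}
    (h : LayeredWidthLE P L ℓ) : LayeredWidthLE (Set.rangeFactorization P) L ℓ := fun x i => by
  simpa only [Subtype.ext_iff, Set.rangeFactorization_coe] using h x i

theorem isHPartition_rangeFactorization {V X : Type*} {G : SimpleGraph V} {H : SimpleGraph X}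
    {P : V → X} (h : ∀ ⦃v w⦄, G.Adj v w → P v = P w ∨ H.Adj (P v) (P w)) :
    IsHPartition G (H.induce (Set.range P)) (Set.rangeFactorization P) :=
  ⟨Set.rangeFactorization_surjective, fun _ _ hvw => (h hvw).imp Subtype.ext id⟩

theorem IsTreeDecomp.exists_mem_bag {V ι : Type*} {G : SimpleGraph V} {T : SimpleGraph ι}
    {B : ι → Set V} (h : IsTreeDecomp G T B) (v : V) : ∃ t, v ∈ B t :=
  let ⟨⟨t, ht⟩⟩ := (h.2.1 v).nonempty
  ⟨t, ht⟩

theorem TreewidthLE.of_embedsIn {α β : Type*} [Finite β] {G : SimpleGraph α}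
    {G' : SimpleGraph β} {k : ℕ} (hG : EmbedsIn G G') (h : TreewidthLE G' k) :
    TreewidthLE G k := by
  obtain ⟨f, hf, hadj⟩ := hG
  obtain ⟨ι, T, B, ⟨hT, hconn, hedge⟩, hbag⟩ := h
  exact ⟨ι, T, fun t => f ⁻¹' B t, ⟨hT, fun v => hconn (f v), fun _ _ hvw => hedge (hadj hvw)⟩,
    fun t => (Set.ncard_le_ncard_of_injOn f (fun _ hv => hv) hf.injOn).trans (hbag t)⟩

theorem TreewidthLE.strongProd {α β : Type*} [Finite β] {H : SimpleGraph α} {k : ℕ}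
    (h : TreewidthLE H k) (K : SimpleGraph β) :
    TreewidthLE (strongProd H K) ((k + 1) * Nat.card β - 1) := by
  obtain ⟨ι, T, B, hB, hbag⟩ := h
  refine ⟨ι, T, fun t => Prod.fst ⁻¹' B t, ⟨hB.1, fun p => hB.2.1 p.1, ?_⟩, fun t => ?_⟩
  · rintro p q ⟨-, hpq | hpq, -⟩
    · obtain ⟨t, ht⟩ := hB.exists_mem_bag p.1
      exact ⟨t, ht, show q.1 ∈ B t from hpq ▸ ht⟩
    · exact hB.2.2 hpq
  · show (Prod.fst ⁻¹' B t).ncard ≤ _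
    have hprod : Prod.fst ⁻¹' B t = B t ×ˢ (Set.univ : Set β) := by ext; simp
    rw [hprod, Set.ncard_prod, Set.ncard_univ]
    have := Nat.mul_le_mul_right (Nat.card β) (hbag t)
    omega

end QueuePaper

open QueuePaper in
theorem width_one_partition_general {V X : Type} [Fintype V] [Fintype X]
    (G : SimpleGraph V) (H : SimpleGraph X) (P : V → X) (L : V → ℕ) (k ℓ : ℕ)
    (hP : IsHPartition G H P) (hW : LayeredWidthLE P L ℓ)
    (hH : TreewidthLE H k) :
    ∃ (X' : Type) (H' : SimpleGraph X') (P' : V → X'),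
      IsHPartition G H' P' ∧ LayeredWidthLE P' L 1 ∧
      TreewidthLE H' ((k + 1) * ℓ - 1) := by
  obtain ⟨r, hr⟩ := hW.exists_fin_refinement
  let Q : V → X × Fin ℓ := fun v => (P v, r v)
  have hQ : ∀ ⦃v w⦄, G.Adj v w → Q v = Q w ∨ (strongProd H ⊤).Adj (Q v) (Q w) := fun v w hvw =>
    or_iff_not_imp_left.2 fun hne => ⟨hne, hP.2 hvw, eq_or_ne _ _⟩
  have hH' : TreewidthLE (strongProd H (⊤ : SimpleGraph (Fin ℓ))) ((k + 1) * ℓ - 1) := by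
    simpa only [Nat.card_fin] using hH.strongProd (⊤ : SimpleGraph (Fin ℓ))
  exact ⟨Set.range Q, (strongProd H ⊤).induce (Set.range Q), Set.rangeFactorization Q,
    isHPartition_rangeFactorization hQ, hr.rangeFactorization,
    hH'.of_embedsIn ⟨Subtype.val, Subtype.val_injective, fun _ _ h => h⟩⟩

open QueuePaper in
/-- If a graph `G` has an `H`-partition of layered width `ℓ` with respect to a layering
`L`, for some graph `H` of treewidth at most `k`, then `G` has an `H'`-partition of
layered width 1 with respect to the same layering, for some graph `H'` of treewidth at
most `(k+1)ℓ - 1`. -/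
theorem width_one_partition {V X : Type} [Fintype V] [Fintype X]
    (G : SimpleGraph V) (H : SimpleGraph X) (P : V → X) (L : V → ℕ) (k ℓ : ℕ)
    (hP : IsHPartition G H P) (hL : IsLayering G L) (hW : LayeredWidthLE P L ℓ)
    (hH : TreewidthLE H k) :
    ∃ (X' : Type) (H' : SimpleGraph X') (P' : V → X'),
      IsHPartition G H' P' ∧ LayeredWidthLE P' L 1 ∧
      TreewidthLE H' ((k + 1) * ℓ - 1) :=
  width_one_partition_general G H P L k ℓ hP hW hH
end
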